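/- arXiv:1603.02380 — 2 statements merged into one kernel-verified Lean document; each statement's English description precedes it below -/
import Mathlib

section
/- Let a₁,…,a₆ be nonzero complex numbers and let z be a nonzero complex number with D(a,z) ≠ 0, where N(a,z) = (1+a₁a₂a₃z)(1+a₁a₅a₆z)(1+a₂a₄a₆z)(1+a₃a₄a₅z) and D(a,z) = (1−z)(1−a₁a₂a₄a₅z)(1−a₁a₃a₄a₆z)(1−a₂a₃a₅a₆z). Then N(a,z)/D(a,z) = 1 if and only if q₂·z² + q₁·z + q₀ = 0, where q₀, q₁, q₂ are as defined in the context. -/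
/-- `q₀` for a generalised hyperbolic tetrahedron with parameters `a₁,…,a₆`. -/
noncomputable def q0 (a₁ a₂ a₃ a₄ a₅ a₆ : ℂ) : ℂ :=
  1 + a₁ * a₂ * a₃ + a₁ * a₅ * a₆ + a₂ * a₄ * a₆ + a₃ * a₄ * a₅
    + a₁ * a₂ * a₄ * a₅ + a₁ * a₃ * a₄ * a₆ + a₂ * a₃ * a₅ * a₆

/-- `q₁` for a generalised hyperbolic tetrahedron with parameters `a₁,…,a₆`. -/
noncomputable def q1 (a₁ a₂ a₃ a₄ a₅ a₆ : ℂ) : ℂ :=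
  -(a₁ * a₂ * a₃ * a₄ * a₅ * a₆) *
    ((a₁ - 1 / a₁) * (a₄ - 1 / a₄) + (a₂ - 1 / a₂) * (a₅ - 1 / a₅)
      + (a₃ - 1 / a₃) * (a₆ - 1 / a₆))

/-- `q₂` for a generalised hyperbolic tetrahedron with parameters `a₁,…,a₆`. -/
noncomputable def q2 (a₁ a₂ a₃ a₄ a₅ a₆ : ℂ) : ℂ :=
  a₁ * a₂ * a₃ * a₄ * a₅ * a₆ *
    (a₁ * a₄ + a₂ * a₅ + a₃ * a₆ + a₁ * a₂ * a₆ + a₁ * a₃ * a₅ + a₂ * a₃ * a₄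
      + a₄ * a₅ * a₆ + a₁ * a₂ * a₃ * a₄ * a₅ * a₆)

/-- The numerator `N(a,z)` of `e^{z·∂𝒰/∂z}`. -/
noncomputable def Npoly (a₁ a₂ a₃ a₄ a₅ a₆ z : ℂ) : ℂ :=
  (1 + a₁ * a₂ * a₃ * z) * (1 + a₁ * a₅ * a₆ * z) * (1 + a₂ * a₄ * a₆ * z)
    * (1 + a₃ * a₄ * a₅ * z)

/-- The denominator `D(a,z)` of `e^{z·∂𝒰/∂z}`. -/
noncomputable def Dpoly (a₁ a₂ a₃ a₄ a₅ a₆ z : ℂ) : ℂ :=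
  (1 - z) * (1 - a₁ * a₂ * a₄ * a₅ * z) * (1 - a₁ * a₃ * a₄ * a₆ * z)
    * (1 - a₂ * a₃ * a₅ * a₆ * z)

/-- For nonzero `a₁,…,a₆` and nonzero `z` with `D(a,z) ≠ 0`,
`N(a,z)/D(a,z) = 1` iff `q₂·z² + q₁·z + q₀ = 0`. -/
theorem ratio_eq_one_iff_quadratic
    (a₁ a₂ a₃ a₄ a₅ a₆ z : ℂ)
    (h₁ : a₁ ≠ 0) (h₂ : a₂ ≠ 0) (h₃ : a₃ ≠ 0) (h₄ : a₄ ≠ 0)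
    (h₅ : a₅ ≠ 0) (h₆ : a₆ ≠ 0) (hz : z ≠ 0)
    (hD : Dpoly a₁ a₂ a₃ a₄ a₅ a₆ z ≠ 0) :
    Npoly a₁ a₂ a₃ a₄ a₅ a₆ z / Dpoly a₁ a₂ a₃ a₄ a₅ a₆ z = 1 ↔
      q2 a₁ a₂ a₃ a₄ a₅ a₆ * z ^ 2 + q1 a₁ a₂ a₃ a₄ a₅ a₆ * z
        + q0 a₁ a₂ a₃ a₄ a₅ a₆ = 0 := by
  have key : Npoly a₁ a₂ a₃ a₄ a₅ a₆ z - Dpoly a₁ a₂ a₃ a₄ a₅ a₆ z =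
      z * (q2 a₁ a₂ a₃ a₄ a₅ a₆ * z ^ 2 + q1 a₁ a₂ a₃ a₄ a₅ a₆ * z
        + q0 a₁ a₂ a₃ a₄ a₅ a₆) := by
    unfold Npoly Dpoly q0 q1 q2
    field_simp
    ring
  rw [div_eq_one_iff_eq hD, ← sub_eq_zero, key, mul_eq_zero]
  simp [hz]
end

section
/- Let a₁,…,a₆ be complex numbers and let z ≠ 0 satisfy |z| < 1, |a₁a₂a₄a₅z| < 1, |a₁a₃a₄a₆z| < 1, |a₂a₃a₅a₆z| < 1, |a₁a₂a₃z| < 1, |a₁a₅a₆z| < 1, |a₂a₄a₆z| < 1, |a₃a₄a₅z| < 1. Let u denote the derivative at z of the function z ↦ 𝒰(a₁,…,a₆,z) (which exists under these hypotheses). Then exp(z·u) = N(a,z)/D(a,z), where N(a,z) = (1+a₁a₂a₃z)(1+a₁a₅a₆z)(1+a₂a₄a₆z)(1+a₃a₄a₅z) and D(a,z) = (1−z)(1−a₁a₂a₄a₅z)(1−a₁a₃a₄a₆z)(1−a₂a₃a₅a₆z). Consequently, exp(z·𝒰_z) = 1 holds at z if and only if q₂·z² + q₁·z + q₀ = 0,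 with q₀, q₁, q₂ as defined in the context. -/
open Complex

/-- The dilogarithm `Li₂(z) = ∑_{n ≥ 1} zⁿ/n²`, written as a sum over `n : ℕ`
via `Li₂(z) = ∑_{n ≥ 0} z^{n+1}/(n+1)²`. -/
noncomputable def Li2 (z : ℂ) : ℂ := ∑' n : ℕ, z ^ (n + 1) / ((n : ℂ) + 1) ^ 2

/-- The potential function `𝒰(a₁,…,a₆,z)` of a generalised hyperbolic
tetrahedron. -/
noncomputable def U (a₁ a₂ a₃ a₄ a₅ a₆ z : ℂ) : ℂ :=
  Li2 z + Li2 (a₁ * a₂ * a₄ * a₅ * z) + Li2 (a₁ * a₃ * a₄ * a₆ * z)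
    + Li2 (a₂ * a₃ * a₅ * a₆ * z)
    - Li2 (-(a₁ * a₂ * a₃ * z)) - Li2 (-(a₁ * a₅ * a₆ * z))
    - Li2 (-(a₂ * a₄ * a₆ * z)) - Li2 (-(a₃ * a₄ * a₅ * z))

/-
Termwise differentiation of `Li₂(w) = ∑ wⁿ⁺¹/(n+1)²` gives `w · Li₂'(w) = ∑ wⁿ⁺¹/(n+1) = -log(1 - w)`,
so by the chain rule `z · d/dz Li₂(cz) = -log(1 - cz)`. Hence `z · 𝒰_z` is a signed sum of eight
logarithms whose exponential is `N(a,z)/D(a,z)`. Finally `N - D = z (q₂z² + q₁z + q₀)` identically,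
so `N/D = 1` iff the quadratic vanishes.
-/

lemma norm_pow_div_succ_le (y : ℂ) (n : ℕ) : ‖y ^ n / ((n : ℂ) + 1)‖ ≤ ‖y‖ ^ n := by
  rw [norm_div, norm_pow, ← Nat.cast_add_one, Complex.norm_natCast]
  exact div_le_self (by positivity) (by simp)

lemma hasDerivAt_Li2 {w : ℂ} (hw : ‖w‖ < 1) :
    HasDerivAt Li2 (∑' n : ℕ, w ^ n / ((n : ℂ) + 1)) w := by
  obtain ⟨r, hwr, hr1⟩ := exists_between hw
  have hr0 : 0 < r := (norm_nonneg w).trans_lt hwr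
  refine hasDerivAt_tsum_of_isPreconnected (u := fun n : ℕ => r ^ n)
    (g := fun (n : ℕ) (y : ℂ) => y ^ (n + 1) / ((n : ℂ) + 1) ^ 2)
    (g' := fun (n : ℕ) (y : ℂ) => y ^ n / ((n : ℂ) + 1))
    (summable_geometric_of_lt_one hr0.le hr1) Metric.isOpen_ball
    (convex_ball (0 : ℂ) r).isPreconnected (fun n y _ => ?_) (fun n y hy => ?_)
    (Metric.mem_ball_self hr0) ?_ (by simpa using hwr)
  · refine ((hasDerivAt_pow (n + 1) y).div_const (((n : ℂ) + 1) ^ 2)).congr_deriv ?_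
    rw [Nat.add_sub_cancel, Nat.cast_add_one]
    field_simp
  · exact (norm_pow_div_succ_le y n).trans
      (pow_le_pow_left₀ (norm_nonneg y) (mem_ball_zero_iff.mp hy).le n)
  · simp

lemma mul_tsum_pow_div_succ_eq_neg_log {w : ℂ} (hw : ‖w‖ < 1) :
    w * ∑' n : ℕ, w ^ n / ((n : ℂ) + 1) = -log (1 - w) := by
  rw [← tsum_mul_left, ← (hasSum_taylorSeries_neg_log' hw).tsum_eq]
  simp only [pow_succ', mul_div_assoc]

lemma hasDerivAt_Li2_const_mul (c : ℂ) {z : ℂ} (hz : z ≠ 0) (h : ‖c * z‖ < 1) :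
    HasDerivAt (fun w => Li2 (c * w)) (-log (1 - c * z) / z) z := by
  refine ((hasDerivAt_Li2 h).comp z ((hasDerivAt_id z).const_mul c)).congr_deriv ?_
  rw [eq_div_iff hz, ← mul_tsum_pow_div_succ_eq_neg_log h]
  simp only [mul_one]
  ring

lemma hasDerivAt_Li2_neg_const_mul (c : ℂ) {z : ℂ} (hz : z ≠ 0) (h : ‖c * z‖ < 1) :
    HasDerivAt (fun w => Li2 (-(c * w))) (-log (1 + c * z) / z) z := by
  simpa only [neg_mul, sub_neg_eq_add] using
    hasDerivAt_Li2_const_mul (-c) hz (by rwa [neg_mul, norm_neg])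

lemma one_add_ne_zero_of_norm_lt_one {w : ℂ} (h : ‖w‖ < 1) : 1 + w ≠ 0 :=
  slitPlane_ne_zero (mem_slitPlane_of_norm_lt_one h)

lemma one_sub_ne_zero_of_norm_lt_one {w : ℂ} (h : ‖w‖ < 1) : 1 - w ≠ 0 := by
  simpa only [sub_eq_add_neg] using one_add_ne_zero_of_norm_lt_one (by rwa [norm_neg])

section Tetrahedron

variable {a₁ a₂ a₃ a₄ a₅ a₆ z : ℂ}

lemma hasDerivAt_U (hz₀ : z ≠ 0) (hm₀ : ‖z‖ < 1)
    (hm₁ : ‖a₁ * a₂ * a₄ * a₅ * z‖ < 1) (hm₂ : ‖a₁ * a₃ * a₄ * a₆ * z‖ < 1)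
    (hm₃ : ‖a₂ * a₃ * a₅ * a₆ * z‖ < 1) (hm₄ : ‖a₁ * a₂ * a₃ * z‖ < 1)
    (hm₅ : ‖a₁ * a₅ * a₆ * z‖ < 1) (hm₆ : ‖a₂ * a₄ * a₆ * z‖ < 1)
    (hm₇ : ‖a₃ * a₄ * a₅ * z‖ < 1) :
    HasDerivAt (fun w => U a₁ a₂ a₃ a₄ a₅ a₆ w)
      ((log (1 + a₁ * a₂ * a₃ * z) + log (1 + a₁ * a₅ * a₆ * z)
          + log (1 + a₂ * a₄ * a₆ * z) + log (1 + a₃ * a₄ * a₅ * z)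
        - (log (1 - z) + log (1 - a₁ * a₂ * a₄ * a₅ * z)
          + log (1 - a₁ * a₃ * a₄ * a₆ * z) + log (1 - a₂ * a₃ * a₅ * a₆ * z))) / z) z := by
  have H₀ := hasDerivAt_Li2_const_mul 1 hz₀ (by rwa [one_mul])
  simp only [one_mul] at H₀
  simp only [U]
  refine ((((((H₀.add (hasDerivAt_Li2_const_mul _ hz₀ hm₁)).add
    (hasDerivAt_Li2_const_mul _ hz₀ hm₂)).add (hasDerivAt_Li2_const_mul _ hz₀ hm₃)).sub
    (hasDerivAt_Li2_neg_const_mul _ hz₀ hm₄)).sub (hasDerivAt_Li2_neg_const_mul _ hz₀ hm₅)).sub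
    (hasDerivAt_Li2_neg_const_mul _ hz₀ hm₆)).sub (hasDerivAt_Li2_neg_const_mul _ hz₀ hm₇)
    |>.congr_deriv ?_
  ring

lemma Dpoly_ne_zero (hm₀ : ‖z‖ < 1)
    (hm₁ : ‖a₁ * a₂ * a₄ * a₅ * z‖ < 1) (hm₂ : ‖a₁ * a₃ * a₄ * a₆ * z‖ < 1)
    (hm₃ : ‖a₂ * a₃ * a₅ * a₆ * z‖ < 1) : Dpoly a₁ a₂ a₃ a₄ a₅ a₆ z ≠ 0 := by
  simp only [Dpoly, mul_ne_zero_iff]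
  exact ⟨⟨⟨one_sub_ne_zero_of_norm_lt_one hm₀, one_sub_ne_zero_of_norm_lt_one hm₁⟩,
    one_sub_ne_zero_of_norm_lt_one hm₂⟩, one_sub_ne_zero_of_norm_lt_one hm₃⟩

lemma Npoly_sub_Dpoly (h₁ : a₁ ≠ 0) (h₂ : a₂ ≠ 0) (h₃ : a₃ ≠ 0) (h₄ : a₄ ≠ 0)
    (h₅ : a₅ ≠ 0) (h₆ : a₆ ≠ 0) :
    Npoly a₁ a₂ a₃ a₄ a₅ a₆ z - Dpoly a₁ a₂ a₃ a₄ a₅ a₆ z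
      = z * (q2 a₁ a₂ a₃ a₄ a₅ a₆ * z ^ 2 + q1 a₁ a₂ a₃ a₄ a₅ a₆ * z
          + q0 a₁ a₂ a₃ a₄ a₅ a₆) := by
  simp only [Npoly, Dpoly, q0, q1, q2]
  field_simp
  ring

end Tetrahedron

/-- If `u` is the derivative at `z` of `z ↦ 𝒰(a₁,…,a₆,z)`, then
`exp(z·u) = N(a,z)/D(a,z)`; consequently `exp(z·u) = 1` iff
`q₂·z² + q₁·z + q₀ = 0`. -/
theorem exp_z_mul_deriv_potential
    (a₁ a₂ a₃ a₄ a₅ a₆ z u : ℂ)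
    (h₁ : a₁ ≠ 0) (h₂ : a₂ ≠ 0) (h₃ : a₃ ≠ 0) (h₄ : a₄ ≠ 0)
    (h₅ : a₅ ≠ 0) (h₆ : a₆ ≠ 0) (hz₀ : z ≠ 0)
    (hm₀ : ‖z‖ < 1)
    (hm₁ : ‖a₁ * a₂ * a₄ * a₅ * z‖ < 1)
    (hm₂ : ‖a₁ * a₃ * a₄ * a₆ * z‖ < 1)
    (hm₃ : ‖a₂ * a₃ * a₅ * a₆ * z‖ < 1)
    (hm₄ : ‖a₁ * a₂ * a₃ * z‖ < 1)
    (hm₅ : ‖a₁ * a₅ * a₆ * z‖ < 1)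
    (hm₆ : ‖a₂ * a₄ * a₆ * z‖ < 1)
    (hm₇ : ‖a₃ * a₄ * a₅ * z‖ < 1)
    (hu : HasDerivAt (fun w => U a₁ a₂ a₃ a₄ a₅ a₆ w) u z) :
    Complex.exp (z * u)
        = Npoly a₁ a₂ a₃ a₄ a₅ a₆ z / Dpoly a₁ a₂ a₃ a₄ a₅ a₆ z ∧
      (Complex.exp (z * u) = 1 ↔
        q2 a₁ a₂ a₃ a₄ a₅ a₆ * z ^ 2 + q1 a₁ a₂ a₃ a₄ a₅ a₆ * z
          + q0 a₁ a₂ a₃ a₄ a₅ a₆ = 0) := by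
  have hexp : Complex.exp (z * u)
      = Npoly a₁ a₂ a₃ a₄ a₅ a₆ z / Dpoly a₁ a₂ a₃ a₄ a₅ a₆ z := by
    rw [hu.unique (hasDerivAt_U hz₀ hm₀ hm₁ hm₂ hm₃ hm₄ hm₅ hm₆ hm₇), mul_div_cancel₀ _ hz₀]
    simp only [exp_sub, exp_add, Npoly, Dpoly]
    rw [exp_log (one_add_ne_zero_of_norm_lt_one hm₄), exp_log (one_add_ne_zero_of_norm_lt_one hm₅),
      exp_log (one_add_ne_zero_of_norm_lt_one hm₆), exp_log (one_add_ne_zero_of_norm_lt_one hm₇),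
      exp_log (one_sub_ne_zero_of_norm_lt_one hm₀), exp_log (one_sub_ne_zero_of_norm_lt_one hm₁),
      exp_log (one_sub_ne_zero_of_norm_lt_one hm₂), exp_log (one_sub_ne_zero_of_norm_lt_one hm₃)]
  refine ⟨hexp, ?_⟩
  rw [hexp, div_eq_one_iff_eq (Dpoly_ne_zero hm₀ hm₁ hm₂ hm₃), ← sub_eq_zero,
    Npoly_sub_Dpoly h₁ h₂ h₃ h₄ h₅ h₆, mul_eq_zero, or_iff_right hz₀]
end
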